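/- arXiv:1206.0983 — 3 statements merged into one kernel-verified Lean document; each statement's English description precedes it below -/
import Mathlib

section
/- Kraft's inequality: if (l_x)_{x ∈ S} are the code-word lengths of a prefix-free code e : S → {0,1}* on a countable set S (i.e., l_x = |e(x)| and e is injective with prefix-free image), then ∑_{x ∈ S} 2^{-l_x} ≤ 1. -/
open MeasureTheory

/-- value of a binary word as a dyadic rational in [0,1). -/
noncomputable def kraftVal : List Bool → ℝ
  | [] => 0
  | b :: w => (if b then (1:ℝ)/2 else 0) + kraftVal w / 2

lemma kraftVal_nonneg : ∀ w : List Bool, 0 ≤ kraftVal w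
  | [] => le_refl 0
  | b :: w => by
    have := kraftVal_nonneg w
    simp only [kraftVal]
    split <;> nlinarith

lemma kraftVal_bound : ∀ w : List Bool, kraftVal w + ((1:ℝ)/2) ^ w.length ≤ 1
  | [] => by simp [kraftVal]
  | b :: w => by
    have := kraftVal_bound w
    simp only [kraftVal, List.length_cons, pow_succ]
    split <;> nlinarith

/-- separation: if neither word is a prefix of the other, their dyadic
intervals are separated. -/
lemma kraft_sep : ∀ u v : List Bool, ¬ u <+: v → ¬ v <+: u →
    kraftVal u + ((1:ℝ)/2) ^ u.length ≤ kraftVal v ∨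
    kraftVal v + ((1:ℝ)/2) ^ v.length ≤ kraftVal u
  | [], v, h, _ => absurd (List.nil_prefix) h
  | a :: u, [], _, h => absurd (List.nil_prefix) h
  | a :: u, b :: v, h1, h2 => by
    by_cases hab : a = b
    · subst hab
      have h1' : ¬ u <+: v := fun h => h1 (List.cons_prefix_cons.mpr ⟨rfl, h⟩)
      have h2' : ¬ v <+: u := fun h => h2 (List.cons_prefix_cons.mpr ⟨rfl, h⟩)
      rcases kraft_sep u v h1' h2' with h | h
      · left
        simp only [kraftVal, List.length_cons, pow_succ]
        nlinarith
      · right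
        simp only [kraftVal, List.length_cons, pow_succ]
        nlinarith
    · have hu1 := kraftVal_nonneg u
      have hv1 := kraftVal_nonneg v
      have hu2 := kraftVal_bound u
      have hv2 := kraftVal_bound v
      cases a <;> cases b <;> simp at hab <;>
        simp only [kraftVal, List.length_cons, pow_succ] <;> norm_num
      · left; nlinarith
      · right; nlinarith

/-- Kraft's inequality, finite version. -/
lemma kraft_finset {S : Type*} (e : S → List Bool)
    (hinj : Function.Injective e)
    (hpf : ∀ x y : S, e x <+: e y → e x = e y) (F : Finset S) :
    ∑ x ∈ F, ((1 : ℝ) / 2) ^ (e x).length ≤ 1 := by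
  set I : S → Set ℝ := fun x =>
    Set.Ico (kraftVal (e x)) (kraftVal (e x) + ((1:ℝ)/2) ^ (e x).length) with hI
  have hdisj : (F : Set S).PairwiseDisjoint I := by
    intro x _ y _ hxy
    have hne : e x ≠ e y := fun h => hxy (hinj h)
    have h1 : ¬ e x <+: e y := fun h => hne (hpf x y h)
    have h2 : ¬ e y <+: e x := fun h => hne.symm (hpf y x h)
    simp only [Function.onFun, hI, Set.Ico_disjoint_Ico, min_le_iff, le_max_iff]
    rcases kraft_sep (e x) (e y) h1 h2 with h | h <;> tauto
  have hmeas : ∀ x ∈ F, MeasurableSet (I x) := fun x _ => measurableSet_Ico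
  have hsum := measure_biUnion_finset hdisj hmeas (μ := volume)
  have hsub : (⋃ x ∈ F, I x) ⊆ Set.Ico (0:ℝ) 1 := by
    intro r hr
    simp only [Set.mem_iUnion] at hr
    obtain ⟨x, _, hx⟩ := hr
    obtain ⟨hx1, hx2⟩ := hx
    have := kraftVal_nonneg (e x)
    have := kraftVal_bound (e x)
    constructor <;> [linarith; linarith]
  have hle : volume (⋃ x ∈ F, I x) ≤ 1 := by
    calc volume (⋃ x ∈ F, I x) ≤ volume (Set.Ico (0:ℝ) 1) :=
          measure_mono hsub
      _ = 1 := by simp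
  rw [hsum] at hle
  have hvol : ∀ x : S, volume (I x) = ENNReal.ofReal (((1:ℝ)/2) ^ (e x).length) := by
    intro x
    simp [hI, Real.volume_Ico]
  rw [Finset.sum_congr rfl (fun x _ => hvol x)] at hle
  rw [← ENNReal.ofReal_sum_of_nonneg (fun x _ => by positivity)] at hle
  exact ENNReal.ofReal_le_one.mp hle

/-- Kraft's inequality: if `e : S → {0,1}*` is a prefix-free code on a countable
set `S` (injective, with no code word a proper prefix of another), then
`∑_{x ∈ S} 2^{-|e(x)|} ≤ 1`. -/
theorem kraft_inequality {S : Type*} [Countable S] (e : S → List Bool)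
    (hinj : Function.Injective e)
    (hpf : ∀ x y : S, e x <+: e y → e x = e y) :
    ∑' x : S, ((1 : ℝ) / 2) ^ (e x).length ≤ 1 := by
  by_cases hs : Summable fun x : S => ((1 : ℝ) / 2) ^ (e x).length
  · exact Summable.tsum_le_of_sum_le hs (kraft_finset e hinj hpf)
  · rw [tsum_eq_zero_of_not_summable hs]; norm_num
end

section
/- Shannon–Fano code existence: if p : ℕ → ℝ≥0 satisfies ∑_x p(x) ≤ 1 and p(x) > 0 for all x, then there exists a prefix-free code e : ℕ → {0,1}* such that |e(x)| ≤ ⌈log₂(1/p(x))⌉ + 2 for all x. -/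
/-!
Cut `[0, 1)` into the consecutive intervals `[S x, S x + p x)`, where `S x = ∑_{y < x} p y`.
A word `w` of length `n` with big-endian value `k` names the dyadic interval
`[k / 2ⁿ, (k + 1) / 2ⁿ)`, and extending a word shrinks its interval. Once
`2 / 2ⁿ ≤ p x`, the interval of `x` contains a dyadic interval of length `2⁻ⁿ`; taking
`n = ⌈log₂ (1 / p x)⌉ + 1` gives the length bound. If the word of `x` were a prefix of the
word of `y`, the dyadic interval of `y` would lie in the intervals of both `x` and `y`, so `x = y`.
-/

open scoped ENNReal

open Finset Function

namespace ShannonFano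

/-- `w` read as a big-endian binary numeral. -/
def binaryValue (w : List Bool) : ℕ :=
  Nat.ofDigits 2 (w.reverse.map Bool.toNat)

theorem binaryValue_append (w u : List Bool) :
    binaryValue (w ++ u) = binaryValue w * 2 ^ u.length + binaryValue u := by
  simp only [binaryValue, List.reverse_append, List.map_append, Nat.ofDigits_append,
    List.length_map, List.length_reverse]
  ring

theorem binaryValue_lt (w : List Bool) : binaryValue w < 2 ^ w.length := by
  have hdigits : ∀ d ∈ w.reverse.map Bool.toNat, d < 2 := by
    simp only [List.mem_map]
    rintro _ ⟨b, -, rfl⟩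
    exact Bool.toNat_lt b
  simpa [binaryValue] using Nat.ofDigits_lt_base_pow_length one_lt_two hdigits

theorem exists_length_eq_binaryValue_eq :
    ∀ {n k : ℕ}, k < 2 ^ n → ∃ w : List Bool, w.length = n ∧ binaryValue w = k
  | 0, k, hk => ⟨[], rfl, by simp_all [binaryValue]⟩
  | n + 1, k, hk => by
    obtain ⟨w, hlen, hval⟩ :=
      exists_length_eq_binaryValue_eq (n := n) (k := k / 2) (by rw [pow_succ] at hk; omega)
    refine ⟨w ++ [decide (k % 2 = 1)], by simp [hlen], ?_⟩
    rw [binaryValue_append, hval]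
    simp only [binaryValue, List.reverse_singleton, List.map_singleton, Nat.ofDigits_singleton,
      List.length_singleton, pow_one]
    rcases Nat.mod_two_eq_zero_or_one k with h | h <;> simp [h] <;> omega

def dyadicInterval (w : List Bool) : Set ℝ :=
  Set.Ico (binaryValue w / 2 ^ w.length) ((binaryValue w + 1) / 2 ^ w.length)

theorem dyadicInterval_nonempty (w : List Bool) : (dyadicInterval w).Nonempty :=
  Set.nonempty_Ico.2 <| div_lt_div_of_pos_right (lt_add_one _) (by positivity)

theorem dyadicInterval_subset_of_prefix {w w' : List Bool} (h : w <+: w') :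
    dyadicInterval w' ⊆ dyadicInterval w := by
  obtain ⟨u, rfl⟩ := h
  have hu : (binaryValue u : ℝ) + 1 ≤ 2 ^ u.length := by
    exact_mod_cast binaryValue_lt u
  have hpow : (0 : ℝ) < 2 ^ w.length := by positivity
  have hpow' : (0 : ℝ) < 2 ^ u.length := by positivity
  simp only [dyadicInterval, binaryValue_append, List.length_append, pow_add, Nat.cast_add,
    Nat.cast_mul, Nat.cast_pow, Nat.cast_ofNat]
  apply Set.Ico_subset_Ico
  · rw [div_le_div_iff₀ hpow (by positivity)]
    nlinarith [(binaryValue u).cast_nonneg (α := ℝ)]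
  · rw [div_le_div_iff₀ (by positivity) hpow]
    nlinarith [(binaryValue w).cast_nonneg (α := ℝ)]

/-- The witness is the dyadic interval starting at `⌈a 2ⁿ⌉ / 2ⁿ`. -/
theorem exists_dyadicInterval_subset_Ico {a b : ℝ} {n : ℕ} (ha : 0 ≤ a) (hb : b ≤ 1)
    (hn : 2 ≤ (b - a) * 2 ^ n) :
    ∃ w : List Bool, w.length = n ∧ dyadicInterval w ⊆ Set.Ico a b := by
  set k := ⌈a * 2 ^ n⌉₊
  have hpow : (0 : ℝ) < 2 ^ n := by positivity
  have hk_ge : a * 2 ^ n ≤ k := Nat.le_ceil _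
  have hk_lt : (k : ℝ) < a * 2 ^ n + 1 := Nat.ceil_lt_add_one (by positivity)
  have hk : k < 2 ^ n := by
    have : (k : ℝ) < 2 ^ n := by nlinarith
    exact_mod_cast this
  obtain ⟨w, hlen, hval⟩ := exists_length_eq_binaryValue_eq hk
  refine ⟨w, hlen, ?_⟩
  rw [dyadicInterval, hlen, hval]
  apply Set.Ico_subset_Ico
  · rwa [le_div_iff₀ hpow]
  · rw [div_le_iff₀ hpow]
    linarith

theorem eq_of_prefix_of_dyadicInterval_subset {ι : Type*} {J : ι → Set ℝ}
    (hJ : Pairwise (Disjoint on J)) {e : ι → List Bool}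
    (he : ∀ i, dyadicInterval (e i) ⊆ J i)
    {i j : ι} (h : e i <+: e j) : i = j := by
  by_contra hij
  obtain ⟨t, ht⟩ := dyadicInterval_nonempty (e j)
  exact Set.disjoint_left.1 (hJ hij) (he i (dyadicInterval_subset_of_prefix h ht)) (he j ht)

theorem exists_natCast_eq_ceil_logb_add_one {r : ℝ} (hr₀ : 0 < r) (hr₁ : r ≤ 1) :
    ∃ n : ℕ, (n : ℝ) = ⌈Real.logb 2 (1 / r)⌉ + 1 ∧ 2 ≤ r * 2 ^ n := by
  set m := ⌈Real.logb 2 (1 / r)⌉.toNat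
  have hlog : 0 ≤ Real.logb 2 (1 / r) :=
    Real.logb_nonneg one_lt_two (by rw [le_div_iff₀ hr₀]; linarith)
  have hm : (m : ℤ) = ⌈Real.logb 2 (1 / r)⌉ := Int.toNat_of_nonneg (Int.ceil_nonneg hlog)
  have hle : 1 / r ≤ 2 ^ m := by
    rw [← Real.rpow_natCast, ← Real.logb_le_iff_le_rpow one_lt_two (by positivity)]
    exact (Int.le_ceil _).trans (by exact_mod_cast hm.ge)
  refine ⟨m + 1, by push_cast; rw [← hm]; norm_cast, ?_⟩
  rw [div_le_iff₀ hr₀] at hle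
  rw [pow_succ]
  linarith

end ShannonFano

open ShannonFano in
/-- Shannon–Fano code existence: if `p : ℕ → ℝ≥0∞` satisfies `∑_x p(x) ≤ 1`
and `p(x) > 0` for all `x`, then there is a prefix-free code
`e : ℕ → {0,1}*` with `|e(x)| ≤ ⌈log₂ (1/p(x))⌉ + 2` for all `x`. -/
theorem shannon_fano (p : ℕ → ℝ≥0∞) (hpos : ∀ x, 0 < p x)
    (hsum : ∑' x, p x ≤ 1) :
    ∃ e : ℕ → List Bool, Function.Injective e ∧
      (∀ x y : ℕ, e x <+: e y → e x = e y) ∧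
      ∀ x : ℕ, ((e x).length : ℝ) ≤
        ⌈Real.logb 2 (1 / (p x).toReal)⌉ + 2 := by
  set S : ℕ → ℝ := fun x => ∑ y ∈ range x, (p y).toReal
  have hp_ne_top x : p x ≠ ∞ :=
    (((ENNReal.le_tsum x).trans hsum).trans_lt ENNReal.one_lt_top).ne
  have hS_succ x : S (x + 1) = S x + (p x).toReal := sum_range_succ _ x
  have hS_nonneg x : 0 ≤ S x := sum_nonneg fun _ _ => ENNReal.toReal_nonneg
  have hS_le_one x : S x ≤ 1 := by
    simp only [S, ← ENNReal.toReal_sum fun y _ => hp_ne_top y]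
    exact ENNReal.toReal_le_of_le_ofReal zero_le_one
      (by simpa using (ENNReal.sum_le_tsum _).trans hsum)
  have hS_mono : Monotone S := monotone_nat_of_le_succ fun x => by
    rw [hS_succ]; linarith [ENNReal.toReal_nonneg (a := p x)]
  have hp_le_one x : (p x).toReal ≤ 1 := by
    linarith [hS_succ x, hS_le_one (x + 1), hS_nonneg x]
  choose N hN_eq hN using fun x => exists_natCast_eq_ceil_logb_add_one
    (ENNReal.toReal_pos (hpos x).ne' (hp_ne_top x)) (hp_le_one x)
  choose e he_len he_sub using fun x => exists_dyadicInterval_subset_Ico (n := N x)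
    (hS_nonneg x) (hS_le_one (x + 1)) (by rw [hS_succ, add_sub_cancel_left]; exact hN x)
  have hprefix x y (h : e x <+: e y) : x = y :=
    eq_of_prefix_of_dyadicInterval_subset hS_mono.pairwise_disjoint_on_Ico_succ he_sub h
  refine ⟨e, fun x y h => hprefix x y (h ▸ List.prefix_refl _),
    fun x y h => by rw [hprefix x y h], fun x => ?_⟩
  rw [he_len, hN_eq]
  linarith
end

section
/- No conditional coding theorem under the classical conditional: there is no constant c such that for all x and all finite sets B ⊆ ℕ with x ∈ B, |−log m(x|B) − K(x|B)| ≤ c, where m(x|B) = m(x)/m(χ_B) with m(x) = 2^{-K(x)} (up to multiplicative constants) and χ_B the characteristic string of B. Concretely: for each n there is a set B of size n with K(χ_B) ≥ n such that for every x ∈ B, −log m(x|B) = K(x) − K(χ_B) + O(1) ≤ −n/2 for n large, while K(x|B) ≥ 0. -/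
private lemma logb_le_two_mul {y : ℝ} (hy : 0 ≤ y) : Real.logb 2 y ≤ 2 * y := by
  rcases eq_or_lt_of_le hy with h | h
  · simp [← h]
  · rw [Real.logb, div_le_iff₀ (Real.log_pos one_lt_two)]
    have h1 : Real.log y ≤ y - 1 := Real.log_le_sub_one_of_pos h
    have h2 : (0.6931471803 : ℝ) < Real.log 2 := Real.log_two_gt_d9
    nlinarith

private lemma logb_le_four_sqrt {y : ℝ} (hy : 1 ≤ y) : Real.logb 2 y ≤ 4 * Real.sqrt y := by
  have hy0 : (0:ℝ) < y := by linarith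
  have hs : 0 < Real.sqrt y := Real.sqrt_pos.2 hy0
  have hls : Real.log y = 2 * Real.log (Real.sqrt y) := by
    have h := Real.log_mul hs.ne' hs.ne'
    rw [Real.mul_self_sqrt hy0.le] at h
    linarith
  have h1 : Real.log (Real.sqrt y) ≤ Real.sqrt y - 1 := Real.log_le_sub_one_of_pos hs
  have h2 : (0.6931471803 : ℝ) < Real.log 2 := Real.log_two_gt_d9
  rw [Real.logb, div_le_iff₀ (Real.log_pos one_lt_two)]
  nlinarith

/-- No conditional Coding Theorem under the classical conditional
`m(x|B) = m(x)/m(χ_B)` (with `m = 2^{-K}` up to multiplicative constants, so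
`−log m(x|B) = K(x) − K(χ_B)`). Hypotheses: `χ B` is the characteristic string
of the finite set `B` (of length `|B|`); incompressibility (for every `n` there
is a set `B` of size `n` with `K(χ_B) ≥ n`); the upper bound
`K(x) ≤ log₂|B| + c₀·log₂ log₂ |B|` for `x ∈ B`; and `K(x|B) ≥ 0`.
Conclusion: there is no constant `c` bounding
`|−log m(x|B) − K(x|B)| = |(K(x) − K(χ_B)) − K(x|B)|` for all finite `B` and
`x ∈ B`. -/
theorem no_classical_conditional_coding_theorem
    (K : ℕ → ℝ) (Kstr : List Bool → ℝ) (Kcond : ℕ → Finset ℕ → ℝ)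
    (χ : Finset ℕ → List Bool)
    (hχ : ∀ B : Finset ℕ, (χ B).length = B.card)
    (hinc : ∀ n : ℕ, ∃ B : Finset ℕ, B.card = n ∧ (n : ℝ) ≤ Kstr (χ B))
    (hub : ∃ c₀ : ℝ, 0 ≤ c₀ ∧ ∀ (B : Finset ℕ), ∀ x ∈ B,
      K x ≤ Real.logb 2 B.card + c₀ * Real.logb 2 (Real.logb 2 B.card))
    (hKcond : ∀ x B, 0 ≤ Kcond x B) :
    ¬ ∃ c : ℝ, ∀ (B : Finset ℕ), ∀ x ∈ B,
      |(K x - Kstr (χ B)) - Kcond x B| ≤ c := by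
  rintro ⟨c, hc⟩
  obtain ⟨c₀, hc₀, hub⟩ := hub
  set a : ℝ := 4 * (1 + 2 * c₀) + |c| + 1 with ha
  have ha1 : 1 ≤ a := by
    have := abs_nonneg c
    nlinarith
  set n : ℕ := ⌈a ^ 2⌉₊ with hn
  have hna : a ^ 2 ≤ (n : ℝ) := Nat.le_ceil _
  have hn1 : (1 : ℝ) ≤ (n : ℝ) := by nlinarith
  have hnpos : 0 < n := by exact_mod_cast lt_of_lt_of_le zero_lt_one hn1
  obtain ⟨B, hcard, hK⟩ := hinc n
  obtain ⟨x, hx⟩ := Finset.card_pos.mp (hcard ▸ hnpos)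
  have h1 := hc B x hx
  have h2 := hub B x hx
  have h3 := hKcond x B
  rw [hcard] at h2
  set s : ℝ := Real.sqrt (n : ℝ) with hs
  have hs1 : 1 ≤ s := by
    rw [hs, show (1:ℝ) = Real.sqrt 1 by simp]
    exact Real.sqrt_le_sqrt hn1
  have hsa : a ≤ s := by
    have : Real.sqrt (a ^ 2) ≤ s := Real.sqrt_le_sqrt hna
    rwa [Real.sqrt_sq (by linarith)] at this
  have hns : (n : ℝ) = s ^ 2 := (Real.sq_sqrt (by linarith : (0:ℝ) ≤ (n:ℝ))).symm
  -- bounds on logs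
  have hl1 : Real.logb 2 (n : ℝ) ≤ 4 * s := logb_le_four_sqrt hn1
  have hl0 : 0 ≤ Real.logb 2 (n : ℝ) := Real.logb_nonneg one_lt_two hn1
  have hl2 : Real.logb 2 (Real.logb 2 (n : ℝ)) ≤ 2 * Real.logb 2 (n : ℝ) :=
    logb_le_two_mul hl0
  -- K x ≤ (1 + 2 c₀) * logb 2 n ≤ (1 + 2 c₀) * 4 s
  have hKx : K x ≤ (1 + 2 * c₀) * (4 * s) := by
    have : K x ≤ Real.logb 2 (n:ℝ) + c₀ * (2 * Real.logb 2 (n:ℝ)) := by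
      calc K x ≤ Real.logb 2 (n:ℝ) + c₀ * Real.logb 2 (Real.logb 2 (n:ℝ)) := h2
        _ ≤ _ := by nlinarith
    nlinarith
  have habs : Kstr (χ B) + Kcond x B - K x ≤ |(K x - Kstr (χ B)) - Kcond x B| := by
    rw [abs_sub_comm]
    calc Kstr (χ B) + Kcond x B - K x = (Kcond x B - (K x - Kstr (χ B))) := by ring
      _ ≤ |Kcond x B - (K x - Kstr (χ B))| := le_abs_self _
  have hcabs : c ≤ |c| := le_abs_self c
  -- Kstr ≥ n = s², so |...| ≥ s² - (1+2c₀)·4s ≥ s(|c|+1) ≥ |c|+1 > c : contradiction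
  nlinarith [abs_nonneg c]
end
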